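/- Let 𝒱 be any subset of {V_{a,b} : n ∈ ℕ, a, b ∈ ℝⁿ} and let A be the closed star-subalgebra of B(H) generated by 𝒰 ∪ 𝒱. Then every nonzero closed two-sided ideal of A contains the projection P_α for some m ∈ ℕ and α ∈ ℝᵐ. -/

import Mathlib

/-!
Call *monomial* an operator `ξ ↦ 1_{cyl N d} · (ξ ∘ splice m c)` with `m ≤ N`, where
`cyl N d` is the set of sequences agreeing with `d` below `N` and `splice m c z` overwrites the
first `m` terms of `z` by those of `c`. The `P_a` and `V_{a,b}` are monomials, and monomials are
closed under adjoints and, up to `0`, under products; so the algebra generated by `𝒰 ∪ 𝒱` lies in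
their span. Compressing a monomial by the projection onto a cylinder `cyl K x` with `K ≥ N` gives
the diagonal coefficient at `x` times that projection.

Given a nonzero closed ideal `I`, pick `t = t₀* t₀ ∈ I` with a nonzero diagonal coefficient
`⟨t χ_x, χ_x⟩`, approximate `t` by some `s` in the span, and compress by a deep enough cylinder
projection `q = P_α`: `q s q = c q` with `‖s - t‖ < |c|`. Then `u = q - c⁻¹ q t q` satisfies
`u q = q - (element of I)` and `‖u‖ < 1`, so `q - uⁿ q ∈ I` tends to `q`, and `q ∈ I`.
-/

open scoped Classical

noncomputable section

/-- The set of real sequences. -/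
abbrev X : Type := ℕ → ℝ

/-- The Hilbert space `ℓ²(X)`. -/
abbrev H : Type := lp (fun _ : X => ℂ) 2

/-- `Xa a` is the set of sequences extending the `n`-tuple `a`. -/
def Xa {n : ℕ} (a : Fin n → ℝ) : Set X := {x | ∀ i : Fin n, x i = a i}

/-- Replace the initial segment of `x` by the tuple `a` (this is `f_{a,b}` for any `b`). -/
def repl {n : ℕ} (a : Fin n → ℝ) (x : X) : X := fun i => if h : i < n then a ⟨i, h⟩ else x i

/-- `P` is the family of orthogonal projections `P_a` onto `ℓ²(X_a)`. -/
def IsProjFamily (P : ∀ n : ℕ, (Fin n → ℝ) → (H →L[ℂ] H)) : Prop :=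
  ∀ (n : ℕ) (a : Fin n → ℝ) (ξ : H) (x : X),
    P n a ξ x = if x ∈ Xa a then ξ x else 0

/-- `V` is the family of partial isometries `V_{a,b}`. -/
def IsVFamily (V : ∀ n : ℕ, (Fin n → ℝ) → (Fin n → ℝ) → (H →L[ℂ] H)) : Prop :=
  ∀ (n : ℕ) (a b : Fin n → ℝ) (ξ : H) (x : X),
    V n a b ξ x = if x ∈ Xa b then ξ (repl a x) else 0

namespace TwoSidedIdeal

variable {R : Type*} [NonUnitalNormedRing R]

theorem mem_of_mul_eq_sub_of_norm_lt_one {I : TwoSidedIdeal R} (hI : IsClosed (I : Set R))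
    {q u r : R} (hr : r ∈ I) (huq : u * q = q - r) (hu : ‖u‖ < 1) : q ∈ I := by
  set e : ℕ → R := fun n => (u * ·)^[n] q
  have he_succ (n : ℕ) : e (n + 1) = u * e n := Function.iterate_succ_apply' _ _ _
  have hmem (n : ℕ) : q - e n ∈ I := by
    induction n with
    | zero => simp [e, I.zero_mem]
    | succ n ih =>
      have : q - e (n + 1) = r + u * (q - e n) := by
        rw [he_succ, mul_sub, huq]; abel
      rw [this]
      exact I.add_mem hr (I.mul_mem_left _ _ ih)
  have hnorm (n : ℕ) : ‖e n‖ ≤ ‖u‖ ^ n * ‖q‖ := by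
    induction n with
    | zero => simp [e]
    | succ n ih =>
      calc ‖e (n + 1)‖ ≤ ‖u‖ * ‖e n‖ := he_succ n ▸ norm_mul_le _ _
        _ ≤ ‖u‖ * (‖u‖ ^ n * ‖q‖) := by gcongr
        _ = ‖u‖ ^ (n + 1) * ‖q‖ := by ring
  have he : Filter.Tendsto e Filter.atTop (nhds 0) := by
    rw [tendsto_zero_iff_norm_tendsto_zero]
    refine squeeze_zero (fun n => norm_nonneg _) hnorm ?_
    simpa using (tendsto_pow_atTop_nhds_zero_of_lt_one (norm_nonneg _) hu).mul_const ‖q‖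
  have : Filter.Tendsto (fun n => q - e n) Filter.atTop (nhds q) := by
    simpa using tendsto_const_nhds.sub he
  exact hI.mem_of_tendsto this (Filter.Eventually.of_forall hmem)

theorem mem_of_mul_mul_eq_smul {𝕜 : Type*} [NormedField 𝕜] [NormedSpace 𝕜 R]
    [IsScalarTower 𝕜 R R] [SMulCommClass 𝕜 R R]
    {I : TwoSidedIdeal R} (hI : IsClosed (I : Set R)) {q s t : R} {c : 𝕜}
    (hq : IsIdempotentElem q) (hq₁ : ‖q‖ ≤ 1) (hqsq : q * s * q = c • q) (ht : t ∈ I)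
    (hst : ‖s - t‖ < ‖c‖) : q ∈ I := by
  have hc : c ≠ 0 := norm_pos_iff.mp ((norm_nonneg _).trans_lt hst)
  set r := (c⁻¹ • q) * t * q
  have hr : r ∈ I := I.mul_mem_right _ _ (I.mul_mem_left _ _ ht)
  have hrq : (q - r) * q = q - r := by
    rw [sub_mul, hq.eq, mul_assoc _ q q, hq.eq]
  have hcr : c • (q - r) = q * (s - t) * q := by
    simp only [r]
    rw [smul_sub, smul_mul_assoc, smul_mul_assoc, smul_smul, mul_inv_cancel₀ hc, one_smul,
      mul_sub, sub_mul, hqsq]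
  have hle : ‖c‖ * ‖q - r‖ ≤ ‖s - t‖ := by
    rw [← norm_smul, hcr]
    calc ‖q * (s - t) * q‖ ≤ ‖q‖ * ‖s - t‖ * ‖q‖ :=
          (norm_mul_le _ _).trans (by gcongr; exact norm_mul_le _ _)
      _ ≤ 1 * ‖s - t‖ * 1 := by gcongr
      _ = ‖s - t‖ := by ring
  refine mem_of_mul_eq_sub_of_norm_lt_one hI hr hrq (lt_of_mul_lt_mul_left ?_ (norm_nonneg c))
  rw [mul_one]
  exact hle.trans_lt hst

end TwoSidedIdeal

open scoped InnerProductSpace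

namespace RealSeq

def cyl (N : ℕ) (d : X) : Set X := {z | ∀ i < N, z i = d i}

def splice (m : ℕ) (c z : X) : X := fun i => if i < m then c i else z i

@[simp] lemma splice_zero (c z : X) : splice 0 c z = z := by
  funext i; simp [splice]

lemma splice_splice (m₁ m₂ : ℕ) (c₁ c₂ z : X) :
    splice m₂ c₂ (splice m₁ c₁ z) = splice (max m₂ m₁) (splice m₂ c₂ c₁) z := by
  funext i; simp only [splice]; split_ifs <;> first | rfl | omega

lemma mem_cyl_and_splice_mem_cyl_iff {N₁ N₂ m₁ : ℕ} {d₁ d₂ c₁ w : X} (hm : m₁ ≤ N₁)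
    (hw₁ : w ∈ cyl N₁ d₁) (hw₂ : splice m₁ c₁ w ∈ cyl N₂ d₂) (z : X) :
    z ∈ cyl N₁ d₁ ∧ splice m₁ c₁ z ∈ cyl N₂ d₂ ↔ z ∈ cyl (max N₁ N₂) (splice N₁ d₁ d₂) := by
  simp only [cyl, splice, Set.mem_ofPred_eq] at *
  constructor
  · rintro ⟨h₁, h₂⟩ i hi
    split_ifs with h
    · exact h₁ i h
    · simpa [show ¬ i < m₁ by omega] using h₂ i (by omega)
  · intro h
    refine ⟨fun i hi => by simpa [hi] using h i (by omega), fun i hi => ?_⟩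
    have := hw₂ i hi
    split_ifs at this ⊢ with him
    · exact this
    · by_cases hiN : i < N₁
      · rw [← this, hw₁ i hiN]; simpa [hiN] using h i (by omega)
      · simpa [hiN] using h i (by omega)

lemma mem_cyl_and_splice_eq_iff {N m : ℕ} {d c w x : X} (hm : m ≤ N) :
    w ∈ cyl N d ∧ splice m c w = x ↔ x ∈ cyl N (splice m c d) ∧ w = splice m d x := by
  constructor
  · rintro ⟨hw, rfl⟩
    simp only [cyl, Set.mem_ofPred_eq, funext_iff, splice] at hw ⊢
    refine ⟨fun i hi => ?_, fun i => ?_⟩ <;> split_ifs with h <;> first | rfl | omega | skip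
    · exact hw i hi
    · exact hw i (by omega)
  · rintro ⟨hx, rfl⟩
    simp only [cyl, Set.mem_ofPred_eq, funext_iff, splice] at hx ⊢
    refine ⟨fun i hi => ?_, fun i => ?_⟩ <;> split_ifs with h <;> first | rfl | omega | skip
    · simpa [h] using hx i hi
    · simpa [h] using (hx i (by omega)).symm

lemma splice_eq_self_iff {m : ℕ} {c z : X} : splice m c z = z ↔ ∀ i < m, c i = z i := by
  simp only [funext_iff, splice]
  refine ⟨fun h i hi => by simpa [hi] using h i, fun h i => ?_⟩
  split_ifs with hi
  · exact h i hi
  · rfl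

lemma mem_cyl_iff_of_mem_cyl {K N : ℕ} {x z d : X} (hz : z ∈ cyl K x) (hN : N ≤ K) :
    z ∈ cyl N d ↔ x ∈ cyl N d := by
  have hzx : ∀ i < N, z i = x i := fun i hi => hz i (by omega)
  exact forall₂_congr fun i hi => by rw [hzx i hi]

lemma splice_mem_cyl_iff {K m : ℕ} {x z c : X} (hz : z ∈ cyl K x) (hm : m ≤ K) :
    splice m c z ∈ cyl K x ↔ splice m c x = x := by
  rw [splice_eq_self_iff]
  refine ⟨fun h i hi => by simpa [splice, hi] using h i (by omega), fun h i hi => ?_⟩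
  simp only [splice]
  split_ifs with him
  · exact h i him
  · exact hz i hi

lemma splice_eq_self_of_mem_cyl {K m : ℕ} {x z c : X} (hz : z ∈ cyl K x) (hm : m ≤ K)
    (hx : splice m c x = x) : splice m c z = z := by
  rw [splice_eq_self_iff] at hx ⊢
  exact fun i hi => (hx i hi).trans (hz i (by omega)).symm

def chi (x : X) : H := lp.single 2 x 1

lemma chi_apply (x z : X) : chi x z = if z = x then 1 else 0 := by
  simp [chi, lp.single_apply, Pi.single_apply]

lemma inner_chi_left (x : X) (ξ : H) : ⟪chi x, ξ⟫_ℂ = ξ x := by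
  simp [chi, lp.inner_single_left]

lemma star_apply (S : H →L[ℂ] H) (ξ : H) (x : X) : (star S) ξ x = ⟪S (chi x), ξ⟫_ℂ := by
  rw [← inner_chi_left, ContinuousLinearMap.star_eq_adjoint,
    ContinuousLinearMap.adjoint_inner_right]

lemma norm_apply_chi_apply_le (T : H →L[ℂ] H) (x y : X) : ‖T (chi x) y‖ ≤ ‖T‖ :=
  calc ‖T (chi x) y‖ ≤ ‖T (chi x)‖ := lp.norm_apply_le_norm two_ne_zero _ _
    _ ≤ ‖T‖ * ‖chi x‖ := T.le_opNorm _
    _ = ‖T‖ := by simp [chi, lp.norm_single]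

lemma exists_apply_chi_ne_zero {T : H →L[ℂ] H} (hT : T ≠ 0) : ∃ x, T (chi x) ≠ 0 := by
  contrapose! hT
  ext1 ξ
  have hsum := (lp.hasSum_single ENNReal.ofNat_ne_top ξ).mapL T
  have hsingle (z : X) : lp.single 2 z (ξ z) = ξ z • chi z := by
    rw [chi, ← lp.single_smul, smul_eq_mul, mul_one]
  simp only [hsingle, map_smul, hT, smul_zero] at hsum
  exact hsum.unique hasSum_zero

lemma star_mul_self_apply_chi_apply (T : H →L[ℂ] H) (x : X) :
    (star T * T) (chi x) x = (‖T (chi x)‖ ^ 2 : ℝ) := by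
  rw [mul_apply_eq_comp, star_apply, inner_self_eq_norm_sq_to_K]
  norm_cast

lemma ext_apply_apply {S T : H →L[ℂ] H} (h : ∀ (ξ : H) (z : X), S ξ z = T ξ z) : S = T :=
  ContinuousLinearMap.ext fun ξ => lp.ext (funext (h ξ))

def HasMonomialForm (N : ℕ) (d : X) (m : ℕ) (c : X) (S : H →L[ℂ] H) : Prop :=
  ∀ (ξ : H) (z : X), S ξ z = if z ∈ cyl N d then ξ (splice m c z) else 0

def IsCylinderProj (N : ℕ) (d : X) (Q : H →L[ℂ] H) : Prop :=
  ∀ (ξ : H) (z : X), Q ξ z = if z ∈ cyl N d then ξ z else 0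

lemma IsCylinderProj.hasMonomialForm {N : ℕ} {d : X} {Q : H →L[ℂ] H} (hQ : IsCylinderProj N d Q)
    (c : X) : HasMonomialForm N d 0 c Q := by
  intro ξ z
  rw [hQ, splice_zero]

namespace HasMonomialForm

variable {N m : ℕ} {d c : X} {S : H →L[ℂ] H}

lemma mul {N₂ m₂ : ℕ} {d₂ c₂ : X} {S₂ : H →L[ℂ] H} (h : HasMonomialForm N d m c S)
    (h₂ : HasMonomialForm N₂ d₂ m₂ c₂ S₂) (hm : m ≤ N) :
    S * S₂ = 0 ∨
      HasMonomialForm (max N N₂) (splice N d d₂) (max m₂ m) (splice m₂ c₂ c) (S * S₂) := by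
  have hmul (ξ : H) (z : X) : (S * S₂) ξ z = if z ∈ cyl N d ∧ splice m c z ∈ cyl N₂ d₂
      then ξ (splice (max m₂ m) (splice m₂ c₂ c) z) else 0 := by
    rw [mul_apply_eq_comp, h, h₂, splice_splice, ite_and]
  by_cases hw : ∃ w, w ∈ cyl N d ∧ splice m c w ∈ cyl N₂ d₂
  · obtain ⟨w, hw₁, hw₂⟩ := hw
    right
    intro ξ z
    rw [hmul]
    exact if_congr (mem_cyl_and_splice_mem_cyl_iff hm hw₁ hw₂ z) rfl rfl
  · left
    refine ext_apply_apply fun ξ z => ?_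
    rw [hmul, if_neg fun hz => hw ⟨z, hz⟩]
    rfl

lemma apply_chi (h : HasMonomialForm N d m c S) (hm : m ≤ N) (x : X) :
    S (chi x) = if x ∈ cyl N (splice m c d) then chi (splice m d x) else 0 := by
  refine lp.ext (funext fun w => ?_)
  rw [h, chi_apply, ← ite_and, if_congr (mem_cyl_and_splice_eq_iff hm) rfl rfl]
  by_cases hx : x ∈ cyl N (splice m c d) <;> simp [hx, chi_apply]

lemma star (h : HasMonomialForm N d m c S) (hm : m ≤ N) :
    HasMonomialForm N (splice m c d) m d (star S) := by
  intro ξ x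
  rw [star_apply, h.apply_chi hm]
  split_ifs
  · exact inner_chi_left _ _
  · exact inner_zero_left _

lemma compress (h : HasMonomialForm N d m c S) (hm : m ≤ N) {K : ℕ} (hK : N ≤ K) {x : X}
    {Q : H →L[ℂ] H} (hQ : IsCylinderProj K x Q) : Q * S * Q = S (chi x) x • Q := by
  have hdiag : S (chi x) x = if x ∈ cyl N d ∧ splice m c x = x then 1 else 0 := by
    rw [h, chi_apply, ite_and]
  refine ext_apply_apply fun ξ z => ?_
  rw [mul_apply_eq_comp, mul_apply_eq_comp, hQ, smul_apply, lp.coeFn_smul,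
    Pi.smul_apply, hQ ξ z, smul_eq_mul]
  by_cases hz : z ∈ cyl K x
  · rw [if_pos hz, if_pos hz, h, hdiag, if_congr (mem_cyl_iff_of_mem_cyl hz hK) rfl rfl]
    by_cases hx : x ∈ cyl N d ∧ splice m c x = x
    · rw [if_pos hx.1, hQ, if_pos ((splice_mem_cyl_iff hz (hm.trans hK)).2 hx.2),
        splice_eq_self_of_mem_cyl hz (hm.trans hK) hx.2, if_pos hx, one_mul]
    · rw [if_neg hx, zero_mul]
      split_ifs with hxd
      · rw [hQ, if_neg fun hs => hx ⟨hxd, (splice_mem_cyl_iff hz (hm.trans hK)).1 hs⟩]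
      · rfl
  · rw [if_neg hz, if_neg hz, mul_zero]

end HasMonomialForm

def monomials : Set (H →L[ℂ] H) :=
  {S | ∃ N d m c, m ≤ N ∧ HasMonomialForm N d m c S}

lemma star_mem_monomials {S : H →L[ℂ] H} (hS : S ∈ monomials) : star S ∈ monomials := by
  obtain ⟨N, d, m, c, hm, h⟩ := hS
  exact ⟨N, _, m, d, hm, h.star hm⟩

def monomialsWithZero : Subsemigroup (H →L[ℂ] H) where
  carrier := insert 0 monomials
  mul_mem' := by
    rintro S₁ S₂ (rfl | ⟨N₁, d₁, m₁, c₁, hm₁, h₁⟩) (rfl | ⟨N₂, d₂, m₂, c₂, hm₂, h₂⟩)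
    · exact Or.inl (zero_mul _)
    · exact Or.inl (zero_mul _)
    · exact Or.inl (mul_zero _)
    · exact (h₁.mul h₂ hm₁).imp_right fun h => ⟨_, _, _, _, by omega, h⟩

lemma adjoin_le_span_monomials {s : Set (H →L[ℂ] H)} (hs : s ⊆ monomials) :
    (NonUnitalStarAlgebra.adjoin ℂ s).toSubmodule ≤ Submodule.span ℂ monomials := by
  rw [NonUnitalStarAlgebra.adjoin_eq_span, Submodule.span_le]
  have hcl : Subsemigroup.closure (s ∪ star s) ≤ monomialsWithZero :=
    Subsemigroup.closure_le.mpr <| Set.union_subset (hs.trans (Set.subset_insert _ _))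
      fun S hS => Or.inr (star_star S ▸ star_mem_monomials (hs hS))
  intro S hS
  rcases hcl hS with rfl | hS
  · exact zero_mem _
  · exact Submodule.subset_span hS

lemma eventually_compress_of_mem_span {S : H →L[ℂ] H} (hS : S ∈ Submodule.span ℂ monomials)
    (x : X) : ∀ᶠ K in Filter.atTop, ∀ Q, IsCylinderProj K x Q → Q * S * Q = S (chi x) x • Q := by
  induction hS using Submodule.span_induction with
  | mem S hS =>
    obtain ⟨N, d, m, c, hm, h⟩ := hS
    exact Filter.eventually_atTop.2 ⟨N, fun K hK Q hQ => h.compress hm hK hQ⟩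
  | zero => exact Filter.Eventually.of_forall fun K Q _ => by simp
  | add S T _ _ hS hT =>
    filter_upwards [hS, hT] with K hSK hTK Q hQ
    rw [mul_add, add_mul, hSK Q hQ, hTK Q hQ, add_apply, lp.coeFn_add,
      Pi.add_apply, add_smul]
  | smul a S _ hS =>
    filter_upwards [hS] with K hSK Q hQ
    rw [mul_smul_comm, smul_mul_assoc, hSK Q hQ, smul_apply, lp.coeFn_smul, Pi.smul_apply,
      smul_smul, smul_eq_mul]

lemma IsCylinderProj.isStarProjection {N : ℕ} {d : X} {Q : H →L[ℂ] H}
    (hQ : IsCylinderProj N d Q) : IsStarProjection Q where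
  isIdempotentElem := ext_apply_apply fun ξ z => by
    rw [mul_apply_eq_comp, hQ, hQ]
    split_ifs <;> rfl
  isSelfAdjoint := ext_apply_apply fun ξ z => by
    rw [((hQ.hasMonomialForm d).star N.zero_le) ξ z, hQ, splice_zero, splice_zero]

lemma Xa_eq_cyl {n : ℕ} {a : Fin n → ℝ} {d : X} (h : ∀ i : Fin n, a i = d i) :
    Xa a = cyl n d := by
  ext z
  exact ⟨fun hz i hi => (hz ⟨i, hi⟩).trans (h ⟨i, hi⟩), fun hz i => (hz i i.2).trans (h i).symm⟩

lemma repl_eq_splice {n : ℕ} {a : Fin n → ℝ} {c : X} (h : ∀ i : Fin n, a i = c i) :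
    repl a = splice n c := by
  funext z i
  simp only [repl, splice]
  split_ifs with hi
  · exact h ⟨i, hi⟩
  · rfl

lemma _root_.IsProjFamily.isCylinderProj {P : ∀ n : ℕ, (Fin n → ℝ) → (H →L[ℂ] H)}
    (hP : IsProjFamily P) {n : ℕ} {a : Fin n → ℝ} {d : X} (h : ∀ i : Fin n, a i = d i) :
    IsCylinderProj n d (P n a) := by
  intro ξ z
  rw [hP, Xa_eq_cyl h]

lemma _root_.IsProjFamily.mem_monomials {P : ∀ n : ℕ, (Fin n → ℝ) → (H →L[ℂ] H)}
    (hP : IsProjFamily P) (n : ℕ) (a : Fin n → ℝ) : P n a ∈ monomials :=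
  ⟨n, _, 0, 0, Nat.zero_le n,
    (hP.isCylinderProj fun i => (Fin.val_injective.extend_apply a 0 i).symm).hasMonomialForm 0⟩

lemma _root_.IsVFamily.mem_monomials {V : ∀ n : ℕ, (Fin n → ℝ) → (Fin n → ℝ) → (H →L[ℂ] H)}
    (hV : IsVFamily V) (n : ℕ) (a b : Fin n → ℝ) : V n a b ∈ monomials := by
  refine ⟨n, Function.extend Fin.val b 0, n, Function.extend Fin.val a 0, le_rfl, fun ξ z => ?_⟩
  rw [hV, Xa_eq_cyl fun i => (Fin.val_injective.extend_apply b 0 i).symm,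
    repl_eq_splice fun i => (Fin.val_injective.extend_apply a 0 i).symm]

end RealSeq

open RealSeq

/-- for any `𝒱 ⊆ {V_{a,b}}`, every nonzero closed two-sided ideal of the closed
star-subalgebra `A` generated by `𝒰 ∪ 𝒱` contains some projection `P_α`. -/
theorem stmt8 (P : ∀ n : ℕ, (Fin n → ℝ) → (H →L[ℂ] H)) (hP : IsProjFamily P)
    (V : ∀ n : ℕ, (Fin n → ℝ) → (Fin n → ℝ) → (H →L[ℂ] H)) (hV : IsVFamily V)
    (𝒱 : Set (H →L[ℂ] H)) (h𝒱 : 𝒱 ⊆ {W | ∃ (n : ℕ) (a b : Fin n → ℝ), W = V n a b})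
    (A : NonUnitalStarSubalgebra ℂ (H →L[ℂ] H))
    (hA : A = (NonUnitalStarAlgebra.adjoin ℂ
      ({W | ∃ (n : ℕ) (a : Fin n → ℝ), W = P n a} ∪ 𝒱)).topologicalClosure)
    (I : TwoSidedIdeal A) (hIclosed : IsClosed (I : Set A)) (hIne : I ≠ ⊥) :
    ∃ (m : ℕ) (α : Fin m → ℝ) (hmem : P m α ∈ A), (⟨P m α, hmem⟩ : A) ∈ I := by
  set G := {W | ∃ (n : ℕ) (a : Fin n → ℝ), W = P n a} ∪ 𝒱
  subst hA
  have hgen : G ⊆ monomials := by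
    rintro W (⟨n, a, rfl⟩ | hW)
    · exact hP.mem_monomials n a
    · obtain ⟨n, a, b, rfl⟩ := h𝒱 hW
      exact hV.mem_monomials n a b
  obtain ⟨t₀, ht₀I, ht₀⟩ := SetLike.exists_of_lt (bot_lt_iff_ne_bot.2 hIne)
  obtain ⟨x, hx⟩ := exists_apply_chi_ne_zero (T := t₀) fun h =>
    ht₀ ((TwoSidedIdeal.mem_bot _).2 (Subtype.ext h))
  set t := star t₀ * t₀
  set c₀ := (t : H →L[ℂ] H) (chi x) x
  have hc₀ : 0 < ‖c₀‖ := by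
    have : c₀ = _ := star_mul_self_apply_chi_apply (t₀ : H →L[ℂ] H) x
    simpa [this] using pow_pos (norm_pos_iff.2 hx) 2
  obtain ⟨s, hs, hts⟩ := Metric.mem_closure_iff.1 t.2 _ (half_pos hc₀)
  obtain ⟨K, hK⟩ := (eventually_compress_of_mem_span (adjoin_le_span_monomials hgen hs) x).exists
  have hq : IsCylinderProj K x (P K fun i => x i) := hP.isCylinderProj fun _ => rfl
  have hqA := (NonUnitalStarAlgebra.adjoin ℂ G).le_topologicalClosure
    (NonUnitalStarAlgebra.subset_adjoin ℂ G (Or.inl ⟨K, fun i => x i, rfl⟩))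
  have hsA := (NonUnitalStarAlgebra.adjoin ℂ G).le_topologicalClosure hs
  refine ⟨K, fun i => x i, hqA, TwoSidedIdeal.mem_of_mul_mul_eq_smul hIclosed
    (s := ⟨s, hsA⟩) (c := s (chi x) x) (Subtype.ext hq.isStarProjection.isIdempotentElem.eq)
    hq.isStarProjection.norm_le (Subtype.ext (hK _ hq)) (I.mul_mem_left (star t₀) t₀ ht₀I) ?_⟩
  have hst : ‖s - (t : H →L[ℂ] H)‖ < ‖c₀‖ / 2 := by rwa [norm_sub_rev, ← dist_eq_norm]
  have hc : ‖s (chi x) x - c₀‖ ≤ ‖s - t‖ := norm_apply_chi_apply_le (s - t) x x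
  show ‖s - (t : H →L[ℂ] H)‖ < ‖s (chi x) x‖
  linarith [norm_sub_norm_le c₀ (s (chi x) x), norm_sub_rev c₀ (s (chi x) x)]
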